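/- arXiv:1303.6461 — 2 statements merged into one kernel-verified Lean document; each statement's English description precedes it below -/
import Mathlib

section
/- Let V : ℝⁿ → ℝ be C², let C > 0, and suppose ‖Hess V(x)‖ ≤ C·|∇V(x)| for all x on the line segment from p to q, where |q - p| = ρ. Then V(q) ≤ V(p) + |∇V(p)|·(e^{Cρ} − 1)/C. -/
/-!
Along `γ(t) = p + t (q - p)`, `t ∈ [0, 1]`, the hypothesis on the Hessian gives
`‖(∇V ∘ γ)'‖ ≤ Cρ ‖∇V ∘ γ‖`, so by Grönwall `‖∇V(γ t)‖ ≤ ‖∇V p‖ e^{Cρt}`. Hence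
`(V ∘ γ)' ≤ ρ ‖∇V p‖ e^{Cρt}`, and comparing `V ∘ γ` with the primitive of the right-hand side
gives the bound at `t = 1`.
-/

open Set Real AffineMap

section

variable {E F : Type*} [NormedAddCommGroup E] [NormedSpace ℝ E]
  [NormedAddCommGroup F] [NormedSpace ℝ F]

theorem norm_le_norm_mul_exp_of_norm_deriv_le {G G' : ℝ → F} {K T : ℝ}
    (hG : ∀ t, HasDerivAt G (G' t) t) (bound : ∀ t ∈ Ico 0 T, ‖G' t‖ ≤ K * ‖G t‖) :
    ∀ t ∈ Icc 0 T, ‖G t‖ ≤ ‖G 0‖ * exp (K * t) := by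
  intro t ht
  have := norm_le_gronwallBound_of_norm_deriv_right_le (ε := 0)
    (fun s _ => (hG s).continuousAt.continuousWithinAt) (fun s _ => (hG s).hasDerivWithinAt)
    le_rfl (fun s hs => by simpa using bound s hs) t ht
  simpa [gronwallBound_ε0] using this

theorem le_add_mul_exp_sub_one_of_deriv_le {f f' : ℝ → ℝ} {a k T : ℝ} (hT : 0 ≤ T)
    (hf : ∀ t, HasDerivAt f (f' t) t) (bound : ∀ t ∈ Ico 0 T, f' t ≤ a * k * exp (k * t)) :
    f T ≤ f 0 + a * (exp (k * T) - 1) := by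
  have hB : ∀ t, HasDerivAt (fun t => f 0 + a * (exp (k * t) - 1)) (a * k * exp (k * t)) t := by
    intro t
    have := (((hasDerivAt_id' t).const_mul k).exp.sub_const 1).const_mul a |>.const_add (f 0)
    exact this.congr_deriv (by ring)
  refine image_le_of_deriv_right_le_deriv_boundary
    (fun s _ => (hf s).continuousAt.continuousWithinAt) (fun s _ => (hf s).hasDerivWithinAt)
    (by simp) (fun s _ => (hB s).continuousAt.continuousWithinAt)
    (fun s _ => (hB s).hasDerivWithinAt) bound ⟨hT, le_rfl⟩

theorem hasDerivAt_comp_lineMap {f : E → F} {p q : E} {t : ℝ}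
    (hf : DifferentiableAt ℝ f (lineMap p q t)) :
    HasDerivAt (fun s => f (lineMap p q s)) (fderiv ℝ f (lineMap p q t) (q - p)) t :=
  hf.hasFDerivAt.comp_hasDerivAt t hasDerivAt_lineMap

theorem norm_comp_lineMap_le_of_norm_fderiv_le {f : E → F} (hf : Differentiable ℝ f) {C : ℝ}
    {p q : E} (hfC : ∀ x ∈ segment ℝ p q, ‖fderiv ℝ f x‖ ≤ C * ‖f x‖) :
    ∀ t ∈ Icc (0 : ℝ) 1, ‖f (lineMap p q t)‖ ≤ ‖f p‖ * exp (C * ‖q - p‖ * t) := by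
  have := norm_le_norm_mul_exp_of_norm_deriv_le (K := C * ‖q - p‖) (T := 1)
    (fun t => hasDerivAt_comp_lineMap (p := p) (q := q) (hf _)) fun t ht => ?_
  · simpa only [lineMap_apply_zero] using this
  have hmem : lineMap p q t ∈ segment ℝ p q :=
    segment_eq_image_lineMap ℝ p q ▸ mem_image_of_mem _ (Ico_subset_Icc_self ht)
  calc ‖fderiv ℝ f (lineMap p q t) (q - p)‖
      ≤ ‖fderiv ℝ f (lineMap p q t)‖ * ‖q - p‖ := ContinuousLinearMap.le_opNorm _ _
    _ ≤ C * ‖f (lineMap p q t)‖ * ‖q - p‖ := by gcongr; exact hfC _ hmem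
    _ = C * ‖q - p‖ * ‖f (lineMap p q t)‖ := by ring

end

theorem ContDiff.gradient {E : Type*} [NormedAddCommGroup E] [InnerProductSpace ℝ E]
    [CompleteSpace E] {V : E → ℝ} {n : WithTop ℕ∞} (hV : ContDiff ℝ (n + 1) V) :
    ContDiff ℝ n (gradient V) :=
  (InnerProductSpace.toDual ℝ E).symm.contDiff.comp (hV.fderiv_right le_rfl)

/-- If `‖Hess V‖ ≤ C·|∇V|` along the segment from `p` to `q`, with `|q - p| = ρ`, then
`V(q) ≤ V(p) + |∇V(p)|·(e^{Cρ} − 1)/C`. -/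
theorem potential_growth_along_segment (n : ℕ) (V : EuclideanSpace ℝ (Fin n) → ℝ)
    (hV : ContDiff ℝ 2 V) (C : ℝ) (hC : 0 < C)
    (p q : EuclideanSpace ℝ (Fin n)) (ρ : ℝ) (hρ : ‖q - p‖ = ρ)
    (hHess : ∀ x ∈ segment ℝ p q, ‖fderiv ℝ (gradient V) x‖ ≤ C * ‖gradient V x‖) :
    V q ≤ V p + ‖gradient V p‖ * (Real.exp (C * ρ) - 1) / C := by
  subst hρ
  have hgrad : Differentiable ℝ (gradient V) := (hV.gradient (n := 1)).differentiable one_ne_zero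
  have hgrowth := norm_comp_lineMap_le_of_norm_fderiv_le hgrad hHess
  have hcomp := le_add_mul_exp_sub_one_of_deriv_le (a := ‖gradient V p‖ / C) (k := C * ‖q - p‖)
    zero_le_one
    (fun t => hasDerivAt_comp_lineMap (p := p) (q := q) (hV.differentiable two_ne_zero _))
    fun t ht => ?_
  · simpa [mul_div_right_comm] using hcomp
  calc fderiv ℝ V (lineMap p q t) (q - p)
      = inner ℝ (gradient V (lineMap p q t)) (q - p) := (inner_gradient_left).symm
    _ ≤ ‖gradient V (lineMap p q t)‖ * ‖q - p‖ := real_inner_le_norm _ _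
    _ ≤ ‖gradient V p‖ * exp (C * ‖q - p‖ * t) * ‖q - p‖ := by
        gcongr; exact hgrowth t (Ico_subset_Icc_self ht)
    _ = ‖gradient V p‖ / C * (C * ‖q - p‖) * exp (C * ‖q - p‖ * t) := by field_simp
end

section
/- Let V : ℝⁿ → ℝ be C² and suppose there are constants C₁, C₂ > 0 and ν > 0 with ν·C₂ < C₁/√(1+C₁²), such that |∇V(x)| > C₁ and ‖Hess V(x)‖ < C₂·|∇V(x)| for all x in the set S = {x : −ν√(1+|∇V(x)|²) < V(x) < 0}. Then f(x) = V(x)/√(1+|∇V(x)|²) has no critical points in S; in fact |∇f(x)| ≥ C₁/√(1+C₁²) − νC₂ > 0 on S. -/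
/-!
With `W = √(1 + |∇V|²)`, the derivative of `f = V / W` in the unit direction `u = ∇V / |∇V|` is
`|∇V| / W - (V / W³) ⟪∇V, (Hess V) u⟫`, whence `|∇f| ≥ |∇V| / W - |f| ‖Hess V‖ |∇V| / W²`.
On `S` we have `|f| < ν` and `‖Hess V‖ |∇V| / W² < C₂ |∇V|² / W² ≤ C₂`, while
`|∇V| / W ≥ C₁ / √(1 + C₁²)` because `t ↦ t / √(1 + t²)` is monotone.
-/

open Real RealInnerProductSpace

theorem div_sqrt_one_add_sq_le_of_nonneg {a b : ℝ} (ha : 0 ≤ a) (hab : a ≤ b) :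
    a / √(1 + a ^ 2) ≤ b / √(1 + b ^ 2) := by
  have hb : 0 ≤ b := ha.trans hab
  rw [div_le_div_iff₀ (by positivity) (by positivity)]
  calc a * √(1 + b ^ 2) = √(a ^ 2 * (1 + b ^ 2)) := by rw [sqrt_mul (sq_nonneg a), sqrt_sq ha]
    _ ≤ √(b ^ 2 * (1 + a ^ 2)) := sqrt_le_sqrt (by nlinarith [mul_le_mul hab hab ha hb])
    _ = b * √(1 + a ^ 2) := by rw [sqrt_mul (sq_nonneg b), sqrt_sq hb]

theorem monotone_div_sqrt_one_add_sq : Monotone fun a : ℝ ↦ a / √(1 + a ^ 2) := by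
  intro a b hab
  rcases le_total 0 a with ha | ha
  · exact div_sqrt_one_add_sq_le_of_nonneg ha hab
  rcases le_total b 0 with hb | hb
  · simpa [neg_div] using div_sqrt_one_add_sq_le_of_nonneg (neg_nonneg.2 hb) (neg_le_neg hab)
  · exact (div_nonpos_of_nonpos_of_nonneg ha (sqrt_nonneg _)).trans (by positivity)

variable {E : Type*} [NormedAddCommGroup E] [InnerProductSpace ℝ E] [CompleteSpace E]

theorem HasGradientAt.hasFDerivAt_div_sqrt_one_add_norm_sq {V : E → ℝ} {g : E → E}
    {G : E →L[ℝ] E} {x : E} (hV : HasGradientAt V (g x) x) (hg : HasFDerivAt g G x) :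
    HasFDerivAt (fun y ↦ V y / √(1 + ‖g y‖ ^ 2))
      ((√(1 + ‖g x‖ ^ 2))⁻¹ • innerSL ℝ (g x) -
        (V x / √(1 + ‖g x‖ ^ 2) ^ 3) • (innerSL ℝ (g x)).comp G) x := by
  have hW : 0 < √(1 + ‖g x‖ ^ 2) := by positivity
  have hsqrt := (hg.norm_sq.const_add 1).sqrt (by positivity)
  have hinv := (hasDerivAt_inv hW.ne').comp_hasFDerivAt x hsqrt
  have hdiv := hV.hasFDerivAt.fun_mul hinv
  simp only [Function.comp_def, ← div_eq_mul_inv] at hdiv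
  refine hdiv.congr_fderiv ?_
  ext v
  simp only [add_apply, sub_apply, smul_apply, neg_smul, neg_apply, nsmul_eq_mul, smul_eq_mul,
    ContinuousLinearMap.comp_apply, coe_innerSL_apply, InnerProductSpace.toDual_apply_apply]
  ring

theorem le_norm_fderiv_div_sqrt_one_add_norm_sq {V : E → ℝ} {g : E → E}
    {G : E →L[ℝ] E} {x : E} (hV : HasGradientAt V (g x) x) (hg : HasFDerivAt g G x) :
    ‖g x‖ / √(1 + ‖g x‖ ^ 2) - |V x| / √(1 + ‖g x‖ ^ 2) * ‖G‖ * ‖g x‖ / (1 + ‖g x‖ ^ 2) ≤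
      ‖fderiv ℝ (fun y ↦ V y / √(1 + ‖g y‖ ^ 2)) x‖ := by
  rw [(hV.hasFDerivAt_div_sqrt_one_add_norm_sq hg).fderiv]
  set D := (√(1 + ‖g x‖ ^ 2))⁻¹ • innerSL ℝ (g x) -
    (V x / √(1 + ‖g x‖ ^ 2) ^ 3) • (innerSL ℝ (g x)).comp G
  rcases eq_or_ne (g x) 0 with hg0 | hg0
  · simp [hg0]
  set W := √(1 + ‖g x‖ ^ 2)
  have hW : 0 < W := by positivity
  have hW3 : W ^ 3 = W * (1 + ‖g x‖ ^ 2) := by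
    rw [pow_succ', sq_sqrt (by positivity)]
  set u := (‖g x‖⁻¹ : ℝ) • g x
  have hu : ‖u‖ = 1 := norm_smul_inv_norm hg0
  have hgu : ⟪g x, u⟫ = ‖g x‖ := by
    rw [real_inner_smul_right, real_inner_self_eq_norm_sq]
    field_simp
  have hGu : |⟪g x, G u⟫| ≤ ‖g x‖ * ‖G‖ :=
    (abs_real_inner_le_norm _ _).trans
      (mul_le_mul_of_nonneg_left (by simpa [hu] using G.le_opNorm u) (norm_nonneg _))
  have herr : V x / W ^ 3 * ⟪g x, G u⟫ ≤ |V x| / W * ‖G‖ * ‖g x‖ / (1 + ‖g x‖ ^ 2) :=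
    calc V x / W ^ 3 * ⟪g x, G u⟫ ≤ |V x| / W ^ 3 * |⟪g x, G u⟫| :=
          (le_abs_self _).trans_eq (by rw [abs_mul, abs_div, abs_of_pos (pow_pos hW 3)])
      _ ≤ |V x| / W ^ 3 * (‖g x‖ * ‖G‖) := by gcongr
      _ = |V x| / W * ‖G‖ * ‖g x‖ / (1 + ‖g x‖ ^ 2) := by rw [hW3]; field_simp
  calc ‖g x‖ / W - |V x| / W * ‖G‖ * ‖g x‖ / (1 + ‖g x‖ ^ 2)
      ≤ D u := by
        simp only [D, sub_apply, smul_apply,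
          ContinuousLinearMap.comp_apply, innerSL_apply_apply, hgu, smul_eq_mul]
        rw [← div_eq_inv_mul]
        linarith
    _ ≤ ‖D‖ := (le_abs_self _).trans (by simpa [hu] using D.le_opNorm u)

theorem no_critical_points_in_strip_general (n : ℕ) (V : EuclideanSpace ℝ (Fin n) → ℝ)
    (hV : ContDiff ℝ 2 V) (C₁ C₂ ν : ℝ) (hC₂ : 0 < C₂) (hν : 0 < ν)
    (hsmall : ν * C₂ < C₁ / Real.sqrt (1 + C₁ ^ 2))
    (S : Set (EuclideanSpace ℝ (Fin n)))
    (hS : S = {x | -ν * Real.sqrt (1 + ‖gradient V x‖ ^ 2) < V x ∧ V x < 0})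
    (hgrad : ∀ x ∈ S, C₁ < ‖gradient V x‖)
    (hHess : ∀ x ∈ S, ‖fderiv ℝ (gradient V) x‖ < C₂ * ‖gradient V x‖)
    (f : EuclideanSpace ℝ (Fin n) → ℝ)
    (hf : ∀ x, f x = V x / Real.sqrt (1 + ‖gradient V x‖ ^ 2)) :
    ∀ x ∈ S,
      ‖gradient f x‖ ≥ C₁ / Real.sqrt (1 + C₁ ^ 2) - ν * C₂ ∧
      gradient f x ≠ 0 := by
  have hgradV : Differentiable ℝ (gradient V) :=
    ((InnerProductSpace.toDual ℝ _).symm.contDiff.comp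
      (hV.fderiv_right (m := 1) le_rfl)).differentiable one_ne_zero
  intro x hx
  have hbound := le_norm_fderiv_div_sqrt_one_add_norm_sq
    (hV.differentiable two_ne_zero x).hasGradientAt (hgradV x).hasFDerivAt
  rw [← funext hf] at hbound
  set r := ‖gradient V x‖
  set H := ‖fderiv ℝ (gradient V) x‖
  have hW : 0 < √(1 + r ^ 2) := by positivity
  have hfx : |V x| / √(1 + r ^ 2) ≤ ν := by
    rw [hS] at hx
    rw [div_le_iff₀ hW, abs_of_neg hx.2]
    linarith [hx.1]
  have hmono : C₁ / √(1 + C₁ ^ 2) ≤ r / √(1 + r ^ 2) :=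
    monotone_div_sqrt_one_add_sq (hgrad x hx).le
  have herr : |V x| / √(1 + r ^ 2) * H * r / (1 + r ^ 2) ≤ ν * C₂ :=
    calc |V x| / √(1 + r ^ 2) * H * r / (1 + r ^ 2) ≤ ν * (C₂ * r) * r / (1 + r ^ 2) := by
          gcongr; exact (hHess x hx).le
      _ = ν * C₂ * (r ^ 2 / (1 + r ^ 2)) := by ring
      _ ≤ ν * C₂ :=
          mul_le_of_le_one_right (by positivity) (div_le_one_of_le₀ (by linarith) (by positivity))
  have hlower : C₁ / √(1 + C₁ ^ 2) - ν * C₂ ≤ ‖gradient f x‖ := by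
    rw [gradient, LinearIsometryEquiv.norm_map]
    linarith
  exact ⟨hlower, fun h0 ↦ by rw [h0, norm_zero] at hlower; linarith⟩

/-- If `|∇V| > C₁` and `‖Hess V‖ < C₂|∇V|` on `S = {x : −ν√(1+|∇V|²) < V < 0}` with
`ν·C₂ < C₁/√(1+C₁²)`, then `f = V/√(1+|∇V|²)` has no critical points in `S`; in fact
`|∇f| ≥ C₁/√(1+C₁²) − νC₂ > 0` on `S`. -/
theorem no_critical_points_in_strip (n : ℕ) (V : EuclideanSpace ℝ (Fin n) → ℝ)
    (hV : ContDiff ℝ 2 V) (C₁ C₂ ν : ℝ) (hC₁ : 0 < C₁) (hC₂ : 0 < C₂) (hν : 0 < ν)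
    (hsmall : ν * C₂ < C₁ / Real.sqrt (1 + C₁ ^ 2))
    (S : Set (EuclideanSpace ℝ (Fin n)))
    (hS : S = {x | -ν * Real.sqrt (1 + ‖gradient V x‖ ^ 2) < V x ∧ V x < 0})
    (hgrad : ∀ x ∈ S, C₁ < ‖gradient V x‖)
    (hHess : ∀ x ∈ S, ‖fderiv ℝ (gradient V) x‖ < C₂ * ‖gradient V x‖)
    (f : EuclideanSpace ℝ (Fin n) → ℝ)
    (hf : ∀ x, f x = V x / Real.sqrt (1 + ‖gradient V x‖ ^ 2)) :
    ∀ x ∈ S,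
      ‖gradient f x‖ ≥ C₁ / Real.sqrt (1 + C₁ ^ 2) - ν * C₂ ∧
      gradient f x ≠ 0 :=
  no_critical_points_in_strip_general n V hV C₁ C₂ ν hC₂ hν hsmall S hS hgrad hHess f hf
end
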